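/- In any clobber position reachable from an even-length alternating-color path by a sequence of legal moves, whenever two adjacent stones have the same color, at least one of the two is an endpoint of its connected component (maximal path segment of stones). -/

import Mathlib

universe u

namespace SetTheory

/-- Mathlib's former pre-game type (removed from Mathlib), with its old definition. -/
inductive PGame : Type (u + 1)
  | mk : ∀ α β : Type u, (α → PGame) → (β → PGame) → PGame

namespace PGame

instance : Zero PGame := ⟨⟨PEmpty, PEmpty, PEmpty.elim, PEmpty.elim⟩⟩

def ofLists (L R : List PGame.{u}) : PGame.{u} :=
  mk (ULift (Fin L.length)) (ULift (Fin R.length)) (fun i => L.get i.down) fun j => R.get j.down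

end PGame

end SetTheory

open SetTheory PGame

inductive Cell | x | o | e
deriving DecidableEq

abbrev Pos := List Cell

/-- All positions reachable by one move of the player with stones `me`
clobbering an adjacent stone of the opponent `opp`. -/
def movesAux (me opp : Cell) : Pos → List Pos
  | a :: b :: rest =>
      (if a = me ∧ b = opp then [Cell.e :: me :: rest] else []) ++
      (if a = opp ∧ b = me then [me :: Cell.e :: rest] else []) ++
      (movesAux me opp (b :: rest)).map (a :: ·)
  | _ => []

def leftMoves (p : Pos) : List Pos := movesAux Cell.x Cell.o p
def rightMoves (p : Pos) : List Pos := movesAux Cell.o Cell.x p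

def stones (p : Pos) : Nat := p.countP (· != Cell.e)

/-- Game value of a clobber position, via fuel recursion (each move removes one stone). -/
def valueFuel : Nat → Pos → PGame
  | 0, _ => 0
  | n+1, p => PGame.ofLists ((leftMoves p).map (valueFuel n)) ((rightMoves p).map (valueFuel n))

def value (p : Pos) : PGame := valueFuel (stones p) p

/-- One legal clobber move (by either player). -/
def Step (p q : Pos) : Prop := q ∈ leftMoves p ∨ q ∈ rightMoves p

/-- Positions reachable by a sequence of legal moves. -/
def Reachable (p q : Pos) : Prop := Relation.ReflTransGen Step p q

/-- The alternating position `(ox)^n`. -/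
def altOX : Nat → Pos
  | 0 => []
  | n+1 => Cell.o :: Cell.x :: altOX n

/-!
A move empties one cell and changes only a neighbouring cell, which keeps a stone. So if four
consecutive stones whose middle two have the same colour appear after a move, they were already
there before it: the window avoids the emptied cell, hence the changed cell can only be one of its
ends, where all that matters is holding a stone. The alternating start has no two adjacent stones
of the same colour, so the pattern never appears, and the pattern is exactly the negation of the
claim.
-/

def IsStone (o : Option Cell) : Prop := o ≠ none ∧ o ≠ some Cell.e

def InteriorSameColorPair (p : Pos) (i : ℕ) : Prop :=
  IsStone p[i]? ∧ IsStone p[i + 1]? ∧ p[i + 1]? = p[i + 2]? ∧ IsStone p[i + 3]?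

/-- A clobber move with the colours forgotten. -/
def IsClobberMove (p q : Pos) : Prop :=
  ∃ j j', (j' = j + 1 ∨ j = j' + 1) ∧ q[j]? = some Cell.e ∧ IsStone p[j']? ∧
    ∀ k, k ≠ j → k ≠ j' → q[k]? = p[k]?

theorem isClobberMove_of_mem_movesAux {me opp : Cell} (hopp : opp ≠ Cell.e) :
    ∀ {p q : Pos}, q ∈ movesAux me opp p → IsClobberMove p q
  | a :: b :: rest, q, hq => by
    have beyond_head (k : ℕ) (h0 : k ≠ 0) (h1 : k ≠ 1) (u v u' v' : Cell) :
        (u' :: v' :: rest)[k]? = (u :: v :: rest)[k]? := by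
      obtain ⟨k, rfl⟩ : ∃ k', k = k' + 2 := ⟨k - 2, by omega⟩
      rfl
    simp only [movesAux, List.mem_append, List.mem_ite_nil_right, List.mem_singleton,
      List.mem_map] at hq
    rcases hq with (⟨⟨rfl, rfl⟩, rfl⟩ | ⟨⟨rfl, rfl⟩, rfl⟩) | ⟨q', hq', rfl⟩
    · exact ⟨0, 1, .inl rfl, rfl, by simpa [IsStone], fun k h0 h1 => beyond_head k h0 h1 ..⟩
    · exact ⟨1, 0, .inr rfl, rfl, by simpa [IsStone], fun k h1 h0 => beyond_head k h0 h1 ..⟩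
    · obtain ⟨j, j', hadj, hj, hj', hsame⟩ := isClobberMove_of_mem_movesAux hopp hq'
      refine ⟨j + 1, j' + 1, by omega, hj, hj', fun k hk hk' => ?_⟩
      cases k with
      | zero => rfl
      | succ k => exact hsame k (by omega) (by omega)

theorem isClobberMove_of_step {p q : Pos} (h : Step p q) : IsClobberMove p q :=
  h.elim (isClobberMove_of_mem_movesAux (by decide)) (isClobberMove_of_mem_movesAux (by decide))

theorem InteriorSameColorPair.of_isClobberMove {p q : Pos} {i : ℕ} (hpq : IsClobberMove p q)
    (hq : InteriorSameColorPair q i) : InteriorSameColorPair p i := by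
  obtain ⟨j, j', hadj, hj, hj', hsame⟩ := hpq
  obtain ⟨h0, h1, h12, h3⟩ := hq
  have h2 : IsStone q[i + 2]? := h12 ▸ h1
  have ne_empty : ∀ k, IsStone q[k]? → k ≠ j := by
    rintro k hk rfl
    exact hk.2 hj
  have stone : ∀ k, IsStone q[k]? → IsStone p[k]? := fun k hk => by
    by_cases hkj' : k = j'
    · exact hkj' ▸ hj'
    · rwa [← hsame k (ne_empty k hk) hkj']
  have := ne_empty _ h0
  have := ne_empty _ h1
  have := ne_empty _ h2
  have := ne_empty _ h3
  -- cells `i + 1` and `i + 2` are flanked by stones, so neither is next to the emptied cell `j`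
  have h1' : q[i + 1]? = p[i + 1]? := hsame _ (by omega) (by omega)
  have h2' : q[i + 2]? = p[i + 2]? := hsame _ (by omega) (by omega)
  exact ⟨stone _ h0, h1' ▸ h1, h1' ▸ h2' ▸ h12, stone _ h3⟩

theorem altOX_getElem?_succ_ne (n i : ℕ) {c : Cell} (h : (altOX n)[i]? = some c) :
    (altOX n)[i + 1]? ≠ some c := by
  induction n generalizing i with
  | zero => simp [altOX] at h
  | succ n ih =>
    rcases i with _ | _ | i
    · simp only [altOX, List.getElem?_cons_zero, Option.some.injEq] at h
      simp [altOX, ← h]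
    · simp only [altOX, List.getElem?_cons_succ, List.getElem?_cons_zero, Option.some.injEq] at h
      cases n <;> simp [altOX, ← h]
    · exact ih i h

theorem not_interiorSameColorPair_altOX (n i : ℕ) : ¬ InteriorSameColorPair (altOX n) i :=
  fun ⟨_, ⟨hsome, _⟩, h12, _⟩ => by
    obtain ⟨c, hc⟩ := Option.ne_none_iff_exists'.mp hsome
    exact altOX_getElem?_succ_ne n (i + 1) hc (h12.symm.trans hc)

theorem not_interiorSameColorPair_of_reachable {n : ℕ} {p : Pos} (h : Reachable (altOX n) p)
    (i : ℕ) : ¬ InteriorSameColorPair p i := by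
  induction h with
  | refl => exact not_interiorSameColorPair_altOX n i
  | tail _ hstep ih => exact fun hp => ih (hp.of_isClobberMove (isClobberMove_of_step hstep))

/-- In any position reachable from an even-length alternating path, whenever two
adjacent stones have the same color, at least one of them is an endpoint of its
connected part (its other neighbor is empty or off the board). -/
theorem adjacent_same_color_endpoint (n : Nat) (p : Pos)
    (h : Reachable (altOX n) p) (i : Nat) (c : Cell) (hc : c ≠ Cell.e)
    (h1 : p[i]? = some c) (h2 : p[i+1]? = some c) :
    (i = 0 ∨ p[i-1]? = some Cell.e) ∨
      (p[i+2]? = none ∨ p[i+2]? = some Cell.e) := by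
  by_contra hcon
  push Not at hcon
  obtain ⟨⟨hi, hprev⟩, hnext⟩ := hcon
  obtain ⟨i, rfl⟩ := Nat.exists_eq_succ_of_ne_zero hi
  have hprev_some : p[i]? ≠ none := by
    have := (List.getElem?_eq_some_iff.mp h1).1
    simp only [ne_eq, List.getElem?_eq_none_iff, not_le]
    omega
  have hstone : IsStone p[i + 1]? := by simp [IsStone, h1, hc]
  exact not_interiorSameColorPair_of_reachable h i
    ⟨⟨hprev_some, hprev⟩, hstone, h1.trans h2.symm, hnext⟩
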